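/- arXiv:2409.19893 — 3 statements merged into one kernel-verified Lean document; each statement's English description precedes it below -/
import Mathlib

section
/- Let f : ℂ → ℂ be holomorphic (differentiable as a complex function) on an open set D, with f'(z) ≠ 0 and Im f(z) ≠ 0 for all z ∈ D. Define u : D → ℝ by u(z) = Real.log (Complex.normSq (f'(z)) / (f(z).im)^2). Then u is smooth as a function of (x,y) with z = x + iy, and satisfies the elliptic Liouville equation u_xx + u_yy = 2 e^u on D. -/
/-- The Laplacian `u_xx + u_yy` of a function `u : ℂ → ℝ`, where `x`, `y` are
the real coordinates `z = x + i y`. -/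
noncomputable def lap (u : ℂ → ℝ) (z : ℂ) : ℝ :=
  fderiv ℝ (fun w => fderiv ℝ u w 1) z 1 +
    fderiv ℝ (fun w => fderiv ℝ u w Complex.I) z Complex.I

open Complex Topology Filter

lemma cderiv_apply (f : ℂ → ℂ) (w e : ℂ) : fderiv ℂ f w e = e * deriv f w := by
  have h := (fderiv ℂ f w).map_smul e (1 : ℂ)
  simp only [smul_eq_mul, mul_one] at h
  rw [h, fderiv_apply_one_eq_deriv]

lemma hasFDerivAt_reComp {f : ℂ → ℂ} {w : ℂ} (hf : DifferentiableAt ℂ f w) :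
    HasFDerivAt (fun x => (f x).re)
      (Complex.reCLM.comp ((fderiv ℂ f w).restrictScalars ℝ)) w :=
  Complex.reCLM.hasFDerivAt.comp w (hf.hasFDerivAt.restrictScalars ℝ)

lemma hasFDerivAt_imComp {f : ℂ → ℂ} {w : ℂ} (hf : DifferentiableAt ℂ f w) :
    HasFDerivAt (fun x => (f x).im)
      (Complex.imCLM.comp ((fderiv ℂ f w).restrictScalars ℝ)) w :=
  Complex.imCLM.hasFDerivAt.comp w (hf.hasFDerivAt.restrictScalars ℝ)

lemma hasDerivAt_logsq {t : ℝ} (ht : t ≠ 0) :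
    HasDerivAt (fun s : ℝ => Real.log (s ^ 2)) (2 / t) t := by
  have h1 : HasDerivAt (fun s : ℝ => s ^ 2) (2 * t) t := by
    simpa using hasDerivAt_pow 2 t
  have h2 := h1.log (pow_ne_zero 2 ht)
  convert h2 using 1
  field_simp

lemma lap_val {D : Set ℂ} (hD : IsOpen D) {f : ℂ → ℂ}
    (hf : ∀ z ∈ D, DifferentiableAt ℂ f z)
    (hf' : ∀ z ∈ D, deriv f z ≠ 0)
    (him : ∀ z ∈ D, (f z).im ≠ 0)
    {z : ℂ} (hz : z ∈ D) :
    lap (fun w => Real.log (Complex.normSq (deriv f w) / ((f w).im) ^ 2)) z =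
      2 * (Complex.normSq (deriv f z) / ((f z).im) ^ 2) := by
  have hfD : DifferentiableOn ℂ f D := fun w hw => (hf w hw).differentiableWithinAt
  have hfa : AnalyticOnNhd ℂ f D := hfD.analyticOnNhd hD
  have hga : AnalyticOnNhd ℂ (deriv f) D := hfa.deriv_of_isOpen hD
  have hgc : ContinuousAt (deriv f) z := (hga z hz).continuousAt
  have hfc : ContinuousAt f z := (hf z hz).continuousAt
  have hpz : (f z).im ≠ 0 := him z hz
  have ev1 : ∀ᶠ w in 𝓝 z, w ∈ D := hD.mem_nhds hz
  have ev2 : ∀ᶠ w in 𝓝 z, (f w).im ≠ 0 :=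
    (Complex.continuous_im.continuousAt.comp hfc).eventually_ne hpz
  have ev3 : ∀ᶠ w in 𝓝 z, deriv f w / deriv f z ∈ Complex.slitPlane := by
    have h1 : ContinuousAt (fun w => deriv f w / deriv f z) z := hgc.div_const _
    have h2 : deriv f z / deriv f z ∈ Complex.slitPlane := by
      rw [div_self (hf' z hz)]; exact Complex.one_mem_slitPlane
    exact h1.eventually_mem (Complex.isOpen_slitPlane.mem_nhds h2)
  have ev4 : ∀ᶠ w in 𝓝 z, deriv f w ≠ 0 := hgc.eventually_ne (hf' z hz)
  obtain ⟨s, hsub, hso, hzs⟩ := eventually_nhds_iff.1 ((ev1.and (ev2.and (ev3.and ev4))))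
  have hhd : ∀ w ∈ s, DifferentiableAt ℂ (fun x => Complex.log (deriv f x / deriv f z)) w :=
    fun w hw => (((hga w (hsub w hw).1).differentiableAt).div_const _).clog (hsub w hw).2.2.1
  have hhD : DifferentiableOn ℂ (fun x => Complex.log (deriv f x / deriv f z)) s :=
    fun w hw => (hhd w hw).differentiableWithinAt
  have hha : AnalyticOnNhd ℂ (fun x => Complex.log (deriv f x / deriv f z)) s :=
    hhD.analyticOnNhd hso
  have hh2 : DifferentiableAt ℂ (deriv (fun x => Complex.log (deriv f x / deriv f z))) z :=
    ((hha.deriv_of_isOpen hso) z hzs).differentiableAt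
  have hg2 : DifferentiableAt ℂ (deriv (deriv f)) z :=
    ((hga.deriv_of_isOpen hD) z hz).differentiableAt
  -- the function agrees with a nicer one on s
  have hueq : ∀ w ∈ s, Real.log (Complex.normSq (deriv f w) / ((f w).im) ^ 2) =
      2 * (Complex.log (deriv f w / deriv f z)).re
        + Real.log (Complex.normSq (deriv f z)) - Real.log ((f w).im ^ 2) := by
    intro w hw
    obtain ⟨hwD, hwim, hwslit, hwg⟩ := hsub w hw
    have habs : ‖deriv f w‖ ≠ 0 := by simpa using hwg
    have hcabs : ‖deriv f z‖ ≠ 0 := by simpa using hf' z hz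
    have h1 : (Complex.log (deriv f w / deriv f z)).re
        = Real.log (‖deriv f w‖) - Real.log (‖deriv f z‖) := by
      rw [Complex.log_re, norm_div, Real.log_div habs hcabs]
    have h2 : Real.log (Complex.normSq (deriv f w)) = 2 * Real.log (‖deriv f w‖) := by
      rw [← Complex.sq_norm, Real.log_pow]; norm_num
    have h3 : Real.log (Complex.normSq (deriv f z)) = 2 * Real.log (‖deriv f z‖) := by
      rw [← Complex.sq_norm, Real.log_pow]; norm_num
    rw [Real.log_div (by simpa [Complex.normSq_eq_zero] using hwg) (pow_ne_zero 2 hwim),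
      h1, h2, h3]
    ring
  -- first derivatives on s
  have hDu : ∀ w ∈ s,
      fderiv ℝ (fun x => Real.log (Complex.normSq (deriv f x) / ((f x).im) ^ 2)) w 1 =
        2 * (deriv (fun x => Complex.log (deriv f x / deriv f z)) w).re
          - 2 * (deriv f w).im * ((f w).im)⁻¹ ∧
      fderiv ℝ (fun x => Real.log (Complex.normSq (deriv f x) / ((f x).im) ^ 2)) w Complex.I =
        -(2 * (deriv (fun x => Complex.log (deriv f x / deriv f z)) w).im)
          - 2 * (deriv f w).re * ((f w).im)⁻¹ := by
    intro w hw
    obtain ⟨hwD, hwim, hwslit, hwg⟩ := hsub w hw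
    have hfw : DifferentiableAt ℂ f w := hf w hwD
    have d1 : HasFDerivAt (fun x => (Complex.log (deriv f x / deriv f z)).re)
        (Complex.reCLM.comp
          ((fderiv ℂ (fun x => Complex.log (deriv f x / deriv f z)) w).restrictScalars ℝ)) w :=
      hasFDerivAt_reComp (hhd w hw)
    have dim : HasFDerivAt (fun x => (f x).im)
        (Complex.imCLM.comp ((fderiv ℂ f w).restrictScalars ℝ)) w := hasFDerivAt_imComp hfw
    have d2 : HasFDerivAt (fun x => Real.log ((f x).im ^ 2))
        ((2 / (f w).im) • (Complex.imCLM.comp ((fderiv ℂ f w).restrictScalars ℝ))) w :=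
      by have h := (hasDerivAt_logsq hwim).comp_hasFDerivAt w dim; exact h
    have dU : HasFDerivAt (fun x => Real.log (Complex.normSq (deriv f x) / ((f x).im) ^ 2))
        ((2:ℝ) • (Complex.reCLM.comp
            ((fderiv ℂ (fun x => Complex.log (deriv f x / deriv f z)) w).restrictScalars ℝ))
          - (2 / (f w).im) • (Complex.imCLM.comp ((fderiv ℂ f w).restrictScalars ℝ))) w := by
      have base := ((d1.const_mul (2:ℝ)).add_const
        (Real.log (Complex.normSq (deriv f z)))).sub d2
      refine base.congr_of_eventuallyEq ?_
      filter_upwards [hso.mem_nhds hw] with x hx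
      exact hueq x hx
    constructor
    · rw [dU.fderiv]
      simp only [ContinuousLinearMap.coe_sub', Pi.sub_apply, ContinuousLinearMap.coe_smul',
        Pi.smul_apply, ContinuousLinearMap.coe_comp', Function.comp_apply,
        ContinuousLinearMap.coe_restrictScalars', Complex.reCLM_apply, Complex.imCLM_apply,
        smul_eq_mul, cderiv_apply, one_mul]
      field_simp
    · rw [dU.fderiv]
      simp only [ContinuousLinearMap.coe_sub', Pi.sub_apply, ContinuousLinearMap.coe_smul',
        Pi.smul_apply, ContinuousLinearMap.coe_comp', Function.comp_apply,
        ContinuousLinearMap.coe_restrictScalars', Complex.reCLM_apply, Complex.imCLM_apply,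
        smul_eq_mul, cderiv_apply, Complex.mul_re, Complex.mul_im, Complex.I_re, Complex.I_im]
      field_simp
      ring
  have evA : (fun w => fderiv ℝ (fun x => Real.log (Complex.normSq (deriv f x) / ((f x).im) ^ 2)) w 1)
      =ᶠ[𝓝 z] (fun w => 2 * (deriv (fun x => Complex.log (deriv f x / deriv f z)) w).re
          - 2 * (deriv f w).im * ((f w).im)⁻¹) := by
    filter_upwards [hso.mem_nhds hzs] with w hw
    exact (hDu w hw).1
  have evB : (fun w => fderiv ℝ (fun x => Real.log (Complex.normSq (deriv f x) / ((f x).im) ^ 2)) w Complex.I)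
      =ᶠ[𝓝 z] (fun w => -(2 * (deriv (fun x => Complex.log (deriv f x / deriv f z)) w).im)
          - 2 * (deriv f w).re * ((f w).im)⁻¹) := by
    filter_upwards [hso.mem_nhds hzs] with w hw
    exact (hDu w hw).2
  have rA1 : HasFDerivAt (fun w => (deriv (fun x => Complex.log (deriv f x / deriv f z)) w).re)
      (Complex.reCLM.comp
        ((fderiv ℂ (deriv (fun x => Complex.log (deriv f x / deriv f z))) z).restrictScalars ℝ)) z :=
    hasFDerivAt_reComp hh2
  have rB1 : HasFDerivAt (fun w => (deriv (fun x => Complex.log (deriv f x / deriv f z)) w).im)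
      (Complex.imCLM.comp
        ((fderiv ℂ (deriv (fun x => Complex.log (deriv f x / deriv f z))) z).restrictScalars ℝ)) z :=
    hasFDerivAt_imComp hh2
  have nA : HasFDerivAt (fun w => (deriv f w).im)
      (Complex.imCLM.comp ((fderiv ℂ (deriv f) z).restrictScalars ℝ)) z :=
    hasFDerivAt_imComp (hga z hz).differentiableAt
  have nB : HasFDerivAt (fun w => (deriv f w).re)
      (Complex.reCLM.comp ((fderiv ℂ (deriv f) z).restrictScalars ℝ)) z :=
    hasFDerivAt_reComp (hga z hz).differentiableAt
  have dp : HasFDerivAt (fun w => (f w).im)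
      (Complex.imCLM.comp ((fderiv ℂ f z).restrictScalars ℝ)) z := hasFDerivAt_imComp (hf z hz)
  have dinv : HasFDerivAt (fun w => ((f w).im)⁻¹)
      ((-(((f z).im) ^ 2)⁻¹) • (Complex.imCLM.comp ((fderiv ℂ f z).restrictScalars ℝ))) z :=
    (hasDerivAt_inv hpz).comp_hasFDerivAt z dp
  have dA : HasFDerivAt (fun w => 2 * (deriv (fun x => Complex.log (deriv f x / deriv f z)) w).re
      - 2 * (deriv f w).im * ((f w).im)⁻¹) _ z :=
    (rA1.const_mul (2:ℝ)).sub ((nA.const_mul (2:ℝ)).mul dinv)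
  have dB : HasFDerivAt (fun w => -(2 * (deriv (fun x => Complex.log (deriv f x / deriv f z)) w).im)
      - 2 * (deriv f w).re * ((f w).im)⁻¹) _ z :=
    ((rB1.const_mul (2:ℝ)).neg).sub ((nB.const_mul (2:ℝ)).mul dinv)
  unfold lap
  rw [evA.fderiv_eq, evB.fderiv_eq, dA.fderiv, dB.fderiv]
  simp only [ContinuousLinearMap.coe_sub', Pi.sub_apply, ContinuousLinearMap.coe_smul',
    Pi.smul_apply, ContinuousLinearMap.coe_comp', Function.comp_apply,
    ContinuousLinearMap.coe_restrictScalars', ContinuousLinearMap.add_apply,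
    ContinuousLinearMap.coe_add', Pi.add_apply, Pi.neg_apply, ContinuousLinearMap.neg_apply,
    ContinuousLinearMap.coe_neg', Complex.reCLM_apply, Complex.imCLM_apply,
    smul_eq_mul, cderiv_apply, Complex.mul_re, Complex.mul_im, Complex.I_re, Complex.I_im,
    Complex.normSq_apply, one_mul]
  field_simp
  ring

/-- If `f` is holomorphic on an open set `D` with `f' ≠ 0` and `Im f ≠ 0`,
then `u = log(|f'|² / (Im f)²)` is smooth on `D` and solves the elliptic
Liouville equation `u_xx + u_yy = 2 e^u`. -/
theorem stmt4 (D : Set ℂ) (hD : IsOpen D) (f : ℂ → ℂ)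
    (hf : ∀ z ∈ D, DifferentiableAt ℂ f z)
    (hf' : ∀ z ∈ D, deriv f z ≠ 0)
    (him : ∀ z ∈ D, (f z).im ≠ 0) :
    let u : ℂ → ℝ := fun z => Real.log (Complex.normSq (deriv f z) / ((f z).im) ^ 2)
    ContDiffOn ℝ (⊤ : ℕ∞) u D ∧ ∀ z ∈ D, lap u z = 2 * Real.exp (u z) := by
  intro u
  have hfD : DifferentiableOn ℂ f D := fun z hz => (hf z hz).differentiableWithinAt
  have hfa : AnalyticOnNhd ℂ f D := hfD.analyticOnNhd hD
  have hga : AnalyticOnNhd ℂ (deriv f) D := hfa.deriv_of_isOpen hD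
  constructor
  · intro z hz
    apply ContDiffAt.contDiffWithinAt
    have cf : ContDiffAt ℝ (⊤ : ℕ∞) f z := ((hfa z hz).restrictScalars).contDiffAt
    have cg : ContDiffAt ℝ (⊤ : ℕ∞) (deriv f) z := ((hga z hz).restrictScalars).contDiffAt
    have cre : ContDiffAt ℝ (⊤ : ℕ∞) (fun w => (deriv f w).re) z :=
      Complex.reCLM.contDiff.contDiffAt.comp z cg
    have cim : ContDiffAt ℝ (⊤ : ℕ∞) (fun w => (deriv f w).im) z :=
      Complex.imCLM.contDiff.contDiffAt.comp z cg
    have cnum : ContDiffAt ℝ (⊤ : ℕ∞) (fun w => Complex.normSq (deriv f w)) z := by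
      simp only [Complex.normSq_apply]
      exact (cre.mul cre).add (cim.mul cim)
    have cden : ContDiffAt ℝ (⊤ : ℕ∞) (fun w => ((f w).im) ^ 2) z :=
      (Complex.imCLM.contDiff.contDiffAt.comp z cf).pow 2
    have hq : ContDiffAt ℝ (⊤ : ℕ∞) (fun w => Complex.normSq (deriv f w) / ((f w).im) ^ 2) z :=
      cnum.div cden (pow_ne_zero 2 (him z hz))
    have hpos : 0 < Complex.normSq (deriv f z) / ((f z).im) ^ 2 :=
      div_pos (Complex.normSq_pos.2 (hf' z hz)) (by have h := him z hz; positivity)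
    exact (Real.contDiffAt_log.2 (ne_of_gt hpos)).comp z hq
  · intro z hz
    have h1 := lap_val hD hf hf' him hz
    have hpos : 0 < Complex.normSq (deriv f z) / ((f z).im) ^ 2 :=
      div_pos (Complex.normSq_pos.2 (hf' z hz)) (by have h := him z hz; positivity)
    have huz : u z = Real.log (Complex.normSq (deriv f z) / ((f z).im) ^ 2) := rfl
    rw [huz, Real.exp_log hpos]
    exact h1
end

section
/- Let f : ℂ → ℂ be holomorphic on an open set D with f'(z) ≠ 0 for all z ∈ D. Define u : D → ℝ by u(z) = Real.log (4 · Complex.normSq (f'(z)) / (1 + Complex.normSq (f(z)))^2). Then u satisfies u_xx + u_yy = -2 e^u on D, where z = x + iy. -/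
open Complex ComplexConjugate Filter Topology InnerProductSpace Laplacian

lemma fderiv_fderiv_apply_apply {𝕜 E F : Type*} [NontriviallyNormedField 𝕜]
    [NormedAddCommGroup E] [NormedSpace 𝕜 E] [NormedAddCommGroup F] [NormedSpace 𝕜 F]
    {u : E → F} {z : E} (hu : ContDiffAt 𝕜 2 u z) (v : E) :
    fderiv 𝕜 (fun w => fderiv 𝕜 u w v) z v = iteratedFDeriv 𝕜 2 u z ![v, v] := by
  have hd : DifferentiableAt 𝕜 (fderiv 𝕜 u) z :=
    (hu.fderiv_right (m := 1) (by norm_num)).differentiableAt one_ne_zero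
  rw [fderiv_clm_apply hd (differentiableAt_const v), iteratedFDeriv_two_apply]
  simp

lemma lap_eq_laplacian {u : ℂ → ℝ} {z : ℂ} (hu : ContDiffAt ℝ 2 u z) : lap u z = Δ u z := by
  rw [lap, laplacian_eq_iteratedFDeriv_complexPlane, fderiv_fderiv_apply_apply hu,
    fderiv_fderiv_apply_apply hu]

section

variable {f : ℂ → ℂ} {z : ℂ}

lemma HasDerivAt.hasFDerivAt_real {f' : ℂ} (hf : HasDerivAt f f' z) :
    HasFDerivAt f (ContinuousLinearMap.mul ℝ ℂ f') z := by
  refine (hf.hasFDerivAt.restrictScalars ℝ).congr_fderiv ?_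
  ext v
  simp [mul_comm]

lemma HasDerivAt.hasFDerivAt_normSq {f' : ℂ} (hf : HasDerivAt f f' z) :
    HasFDerivAt (fun w => normSq (f w))
      ((2 : ℝ) • reCLM.comp (ContinuousLinearMap.mul ℝ ℂ (conj (f z) * f'))) z := by
  simp_rw [normSq_eq_norm_sq]
  refine hf.hasFDerivAt_real.norm_sq.congr_fderiv ?_
  ext v
  simp [Complex.inner]
  ring

lemma one_add_normSq_pos (w : ℂ) : 0 < 1 + normSq w := by
  linarith [normSq_nonneg w]

lemma AnalyticAt.contDiffAt_log_one_add_normSq {n : WithTop ℕ∞} (hf : AnalyticAt ℂ f z) :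
    ContDiffAt ℝ n (fun w => Real.log (1 + normSq (f w))) z := by
  simp_rw [normSq_eq_norm_sq]
  exact (contDiffAt_const.add ((contDiff_norm_sq ℝ).contDiffAt.comp z
    (hf.contDiffAt.restrict_scalars ℝ))).log (by rw [Function.comp_apply]; positivity)

lemma fderiv_log_one_add_normSq_apply (hf : DifferentiableAt ℂ f z) (v : ℂ) :
    fderiv ℝ (fun w => Real.log (1 + normSq (f w))) z v =
      2 * (conj (f z) * deriv f z * v).re / (1 + normSq (f z)) := by
  rw [(((hf.hasDerivAt.hasFDerivAt_normSq).const_add 1).log (one_add_normSq_pos _).ne').fderiv]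
  simp
  ring

lemma fderiv_fderiv_log_one_add_normSq_apply_apply (hf : AnalyticAt ℂ f z) (v : ℂ) :
    fderiv ℝ (fun w => fderiv ℝ (fun w => Real.log (1 + normSq (f w))) w v) z v =
      2 * (normSq (deriv f z * v) + (conj (f z) * deriv (deriv f) z * v ^ 2).re) /
          (1 + normSq (f z)) -
        (2 * (conj (f z) * deriv f z * v).re) ^ 2 / (1 + normSq (f z)) ^ 2 := by
  have hfirst : (fun w => fderiv ℝ (fun w => Real.log (1 + normSq (f w))) w v) =ᶠ[𝓝 z]
      fun w => 2 * (conj (f w) * deriv f w * v).re / (1 + normSq (f w)) :=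
    hf.eventually_analyticAt.mono fun w hw => fderiv_log_one_add_normSq_apply hw.differentiableAt v
  have hconj := (conjCLE.toContinuousLinearMap.hasFDerivAt).comp z
    hf.differentiableAt.hasDerivAt.hasFDerivAt_real
  have hnum := (reCLM.hasFDerivAt.comp z
    ((hconj.mul hf.deriv.differentiableAt.hasDerivAt.hasFDerivAt_real).mul_const v)).const_mul 2
  have hinv := (hasDerivAt_inv (one_add_normSq_pos (f z)).ne').comp_hasFDerivAt z
    ((hf.differentiableAt.hasDerivAt.hasFDerivAt_normSq).const_add 1)
  have hsecond : HasFDerivAt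
      (fun w => 2 * (conj (f w) * deriv f w * v).re / (1 + normSq (f w))) _ z :=
    hnum.mul hinv
  rw [hfirst.fderiv_eq, hsecond.fderiv]
  have hA := (one_add_normSq_pos (f z)).ne'
  simp
  field_simp
  simp [normSq_apply, pow_two]
  ring

lemma AnalyticAt.lap_log_one_add_normSq (hf : AnalyticAt ℂ f z) :
    lap (fun w => Real.log (1 + normSq (f w))) z =
      4 * normSq (deriv f z) / (1 + normSq (f z)) ^ 2 := by
  -- the `f''` terms cancel because `1 ^ 2 = -I ^ 2`
  rw [lap, fderiv_fderiv_log_one_add_normSq_apply_apply hf,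
    fderiv_fderiv_log_one_add_normSq_apply_apply hf]
  have hA := (one_add_normSq_pos (f z)).ne'
  field_simp
  simp [normSq_apply]
  ring

end

lemma log_four_mul_normSq_div_eq {a b : ℂ} (ha : a ≠ 0) :
    Real.log (4 * normSq a / (1 + normSq b) ^ 2) =
      Real.log 4 + 2 * Real.log ‖a‖ - 2 * Real.log (1 + normSq b) := by
  have hA := (one_add_normSq_pos b).ne'
  have ha' := (normSq_pos.2 ha).ne'
  rw [Real.log_div (by positivity) (by positivity), Real.log_mul (by norm_num) ha',
    normSq_eq_norm_sq, Real.log_pow, Real.log_pow]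
  push_cast
  ring

/-- If `f` is holomorphic on an open set `D` with `f' ≠ 0`, then
`u = log(4|f'|² / (1+|f|²)²)` solves the elliptic Liouville equation
`u_xx + u_yy = -2 e^u` on `D`. -/
theorem stmt5 (D : Set ℂ) (hD : IsOpen D) (f : ℂ → ℂ)
    (hf : ∀ z ∈ D, DifferentiableAt ℂ f z)
    (hf' : ∀ z ∈ D, deriv f z ≠ 0) :
    let u : ℂ → ℝ := fun z =>
      Real.log (4 * Complex.normSq (deriv f z) / (1 + Complex.normSq (f z)) ^ 2)
    ∀ z ∈ D, lap u z = -2 * Real.exp (u z) := by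
  intro u z hz
  have hfa : AnalyticAt ℂ f z :=
    DifferentiableOn.analyticAt (fun w hw => (hf w hw).differentiableWithinAt) (hD.mem_nhds hz)
  set h : ℂ → ℝ := fun w => Real.log ‖deriv f w‖
  set ℓ : ℂ → ℝ := fun w => Real.log (1 + normSq (f w))
  have hharm : HarmonicAt h z := hfa.deriv.harmonicAt_log_norm (hf' z hz)
  have hℓ : ContDiffAt ℝ 2 ℓ z := hfa.contDiffAt_log_one_add_normSq
  have h2h : ContDiffAt ℝ 2 ((2 : ℝ) • h) z := hharm.1.const_smul (2 : ℝ)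
  have h2ℓ : ContDiffAt ℝ 2 ((2 : ℝ) • ℓ) z := hℓ.const_smul (2 : ℝ)
  have hsum : ContDiffAt ℝ 2 ((fun _ => Real.log 4) + (2 : ℝ) • h) z := contDiffAt_const.add h2h
  have hu : u =ᶠ[𝓝 z] (fun _ => Real.log 4) + (2 : ℝ) • h - (2 : ℝ) • ℓ := by
    filter_upwards [hfa.deriv.continuousAt.eventually_ne (hf' z hz)] with w hw
    exact log_four_mul_normSq_div_eq hw
  have hexp : 0 < 4 * normSq (deriv f z) / (1 + normSq (f z)) ^ 2 :=
    div_pos (mul_pos four_pos (normSq_pos.2 (hf' z hz))) (pow_pos (one_add_normSq_pos _) 2)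
  rw [lap_eq_laplacian ((hsum.sub h2ℓ).congr_of_eventuallyEq hu),
    (laplacian_congr_nhds hu).eq_of_nhds, hsum.laplacian_sub h2ℓ,
    contDiffAt_const.laplacian_add h2h, laplacian_smul _ hharm.1, laplacian_smul _ hℓ,
    laplacian_const, hharm.2.eq_of_nhds, ← lap_eq_laplacian hℓ, hfa.lap_log_one_add_normSq,
    Real.exp_log hexp]
  simp only [Pi.zero_apply, smul_eq_mul]
  ring
end

section
/- Let f : ℂ → ℂ be holomorphic on an open set D with Im f(z) ≠ 0 and f'(z) ≠ 0 on D, and let W : D → ℂ be defined by W(z) = i·f'(z) / Im f(z), equivalently W(z) = 2 f'(z) / (conj(f(z)) - f(z)). Then W satisfies the PDE ∂W/∂z̄ = (1/2)|W|², where ∂/∂z̄ = (1/2)(∂/∂x + i ∂/∂y) and z = x + iy. -/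
/-!
Write `W = (i f') · (Im f)⁻¹`. The first factor is holomorphic, so `∂_z̄` annihilates it, and
`∂_z̄ (Im f) = (i/2) conj f'` because `Im f = (f - conj f) / 2i` with `∂_z̄ f = 0` and
`∂_z̄ (conj f) = conj f'`. By the Leibniz and chain rules for `∂_z̄`,
`∂_z̄ W = i f' · (-(Im f)⁻²) · (i/2) conj f' = |f'|² / (2 (Im f)²) = |W|² / 2`.
The second expression for `W` comes from `conj f - f = -2i Im f`.
-/

/-- The Wirtinger derivative `∂W/∂z̄ = (1/2)(∂_x + i ∂_y) W`. -/
noncomputable def wirtingerZbar (W : ℂ → ℂ) (z : ℂ) : ℂ :=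
  (1 / 2 : ℂ) * (fderiv ℝ W z 1 + Complex.I * fderiv ℝ W z Complex.I)

open Complex ComplexConjugate

theorem wirtingerZbar_mul {g φ : ℂ → ℂ} {z : ℂ} (hg : DifferentiableAt ℝ g z)
    (hφ : DifferentiableAt ℝ φ z) :
    wirtingerZbar (fun w => g w * φ w) z = g z * wirtingerZbar φ z + φ z * wirtingerZbar g z := by
  simp only [wirtingerZbar, fderiv_fun_mul hg hφ, add_apply,
    smul_apply, smul_eq_mul]
  ring

theorem wirtingerZbar_eq_zero {g : ℂ → ℂ} {z : ℂ} (hg : DifferentiableAt ℂ g z) :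
    wirtingerZbar g z = 0 := by
  have hI : fderiv ℂ g z I = I * fderiv ℂ g z 1 := by
    rw [← smul_eq_mul, ← ContinuousLinearMap.map_smul, smul_eq_mul, mul_one]
  simp only [wirtingerZbar, hg.fderiv_restrictScalars ℝ, ContinuousLinearMap.coe_restrictScalars',
    hI, ← mul_assoc, I_mul_I]
  ring

theorem wirtingerZbar_comp {h φ : ℂ → ℂ} {z : ℂ} (hh : DifferentiableAt ℂ h (φ z))
    (hφ : DifferentiableAt ℝ φ z) :
    wirtingerZbar (h ∘ φ) z = deriv h (φ z) * wirtingerZbar φ z := by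
  have hL := (hh.hasDerivAt.hasFDerivAt.restrictScalars ℝ).comp z hφ.hasFDerivAt
  simp only [wirtingerZbar, hL.fderiv, ContinuousLinearMap.coe_comp, Function.comp_apply,
    ContinuousLinearMap.coe_restrictScalars', ContinuousLinearMap.toSpanSingleton_apply, smul_eq_mul]
  ring

theorem wirtingerZbar_ofReal_im {f : ℂ → ℂ} {z : ℂ} (hf : DifferentiableAt ℂ f z) :
    wirtingerZbar (fun w => ((f w).im : ℂ)) z = I / 2 * conj (deriv f z) := by
  have hL : HasFDerivAt (fun w => ((f w).im : ℂ)) _ z := ofRealCLM.hasFDerivAt.comp z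
    (imCLM.hasFDerivAt.comp z (hf.hasDerivAt.hasFDerivAt.restrictScalars ℝ))
  simp only [wirtingerZbar, hL.fderiv, ContinuousLinearMap.coe_comp, Function.comp_apply,
    ContinuousLinearMap.coe_restrictScalars', ContinuousLinearMap.toSpanSingleton_apply, smul_eq_mul,
    ofRealCLM_apply, imCLM_apply]
  apply Complex.ext <;> simp

theorem I_mul_div_im_eq_two_mul_div_conj_sub (a w : ℂ) :
    I * a / (w.im : ℂ) = 2 * a / (conj w - w) := by
  rw [← neg_sub, sub_conj]
  rcases eq_or_ne w.im 0 with h | h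
  · simp [h]
  · push_cast
    field_simp
    ring_nf
    simp

theorem stmt6_general (D : Set ℂ) (hD : IsOpen D) (f : ℂ → ℂ)
    (hf : ∀ z ∈ D, DifferentiableAt ℂ f z)
    (him : ∀ z ∈ D, (f z).im ≠ 0) :
    let W : ℂ → ℂ := fun z => Complex.I * deriv f z / (((f z).im : ℝ) : ℂ)
    (∀ z ∈ D, W z = 2 * deriv f z / ((starRingEnd ℂ) (f z) - f z)) ∧
    ∀ z ∈ D, wirtingerZbar W z = (1 / 2 : ℂ) * (Complex.normSq (W z) : ℝ) := by
  intro W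
  refine ⟨fun z _ => I_mul_div_im_eq_two_mul_div_conj_sub _ _, fun z hz => ?_⟩
  have hf'z : DifferentiableAt ℂ (deriv f) z :=
    (DifferentiableOn.deriv (fun w hw => (hf w hw).differentiableWithinAt) hD z hz).differentiableAt
      (hD.mem_nhds hz)
  have hg : DifferentiableAt ℂ (fun w => I * deriv f w) z := hf'z.const_mul I
  have hφ : DifferentiableAt ℝ (fun w => ((f w).im : ℂ)) z := by
    have := (hf z hz).restrictScalars ℝ
    fun_prop
  have hφz : ((f z).im : ℂ) ≠ 0 := ofReal_ne_zero.2 (him z hz)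
  have hW : W = fun w => (I * deriv f w) * (Inv.inv ∘ fun w => ((f w).im : ℂ)) w :=
    funext fun w => div_eq_mul_inv _ _
  rw [hW, wirtingerZbar_mul (hg.restrictScalars ℝ) (by fun_prop), wirtingerZbar_eq_zero hg,
    wirtingerZbar_comp (differentiableAt_inv hφz) hφ, wirtingerZbar_ofReal_im (hf z hz),
    deriv_inv, ← mul_conj]
  simp only [Function.comp_apply, map_mul, map_inv₀, conj_I, conj_ofReal]
  ring

/-- If `f` is holomorphic on an open set `D` with `Im f ≠ 0` and `f' ≠ 0`, then
`W = i f' / Im f` (equivalently `2 f' / (conj f - f)`) solves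
`∂W/∂z̄ = (1/2)|W|²`. -/
theorem stmt6 (D : Set ℂ) (hD : IsOpen D) (f : ℂ → ℂ)
    (hf : ∀ z ∈ D, DifferentiableAt ℂ f z)
    (him : ∀ z ∈ D, (f z).im ≠ 0)
    (hf' : ∀ z ∈ D, deriv f z ≠ 0) :
    let W : ℂ → ℂ := fun z => Complex.I * deriv f z / (((f z).im : ℝ) : ℂ)
    (∀ z ∈ D, W z = 2 * deriv f z / ((starRingEnd ℂ) (f z) - f z)) ∧
    ∀ z ∈ D, wirtingerZbar W z = (1 / 2 : ℂ) * (Complex.normSq (W z) : ℝ) :=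
  stmt6_general D hD f hf him
end
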